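/- Let Λ be an admissible graph. For every q^L ∈ F^L there exists a complex number λ of modulus one, depending only on Λ and q^L, such that v_{[Λ,q^L]} = λ · z(Λ^J_L q^L) ∘ v_{[Λ,0^L]}, where z(Λ^J_L q^L) is the multiplier operator on H_J. -/

import Mathlib

open scoped BigOperators

noncomputable section

/-- The Hilbert space `H_K` of complex functions on the configurations `F^K`. -/
abbrev HS (F K : Type*) : Type _ := (K → F) → ℂ

/-- The linear map on function spaces given by an integral kernel. -/
def kernelMap {α β : Type*} [Fintype α] (k : β → α → ℂ) : (α → ℂ) →ₗ[ℂ] (β → ℂ) where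
  toFun ψ := fun b => ∑ a, k b a * ψ a
  map_add' ψ φ := by
    funext b
    simp only [Pi.add_apply, mul_add, Finset.sum_add_distrib]
  map_smul' c ψ := by
    funext b
    simp only [Pi.smul_apply, smul_eq_mul, RingHom.id_apply, Finset.mul_sum]
    exact Finset.sum_congr rfl fun _ _ => by ring

/-- The operator of multiplication by a fixed function. -/
def mulFun {α : Type*} (f : α → ℂ) : (α → ℂ) →ₗ[ℂ] (α → ℂ) where
  toFun ψ := fun a => f a * ψ a
  map_add' ψ φ := by funext a; simp [mul_add]
  map_smul' c ψ := by funext a; simp; ring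

/-- The pullback (precomposition) operator along a map of configuration spaces. -/
def compMap {α β : Type*} (σ : β → α) : (α → ℂ) →ₗ[ℂ] (β → ℂ) where
  toFun ψ := fun b => ψ (σ b)
  map_add' _ _ := rfl
  map_smul' _ _ := rfl

variable {F : Type*} [Field F] [Fintype F] [DecidableEq F]

/-- `ε` is an injective character of the additive group of `F` into the unit circle. -/
def IsCharacter (ε : F → ℂ) : Prop :=
  Function.Injective ε ∧ (∀ a, ‖ε a‖ = 1) ∧ ∀ a b, ε (a + b) = ε a * ε b

/-- The symmetric bicharacter `χ(p,q) = Π_k ε(p_k q_k)`. -/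
def chi (ε : F → ℂ) {K : Type*} [Fintype K] (p q : K → F) : ℂ := ∏ k, ε (p k * q k)

/-- The shift operator `x(q)`, `(x(q)ψ)(q₁) = ψ(q₁ - q)`. -/
def shiftOp {K : Type*} (q : K → F) : HS F K →ₗ[ℂ] HS F K :=
  compMap (fun q₁ => q₁ - q)

/-- The multiplier operator `z(p)`, `(z(p)ψ)(q₁) = χ(p,q₁)ψ(q₁)`. -/
def multOp (ε : F → ℂ) {K : Type*} [Fintype K] (p : K → F) : HS F K →ₗ[ℂ] HS F K :=
  mulFun (chi ε p)

/-- The Weyl operator `w(ξ) = z(p)x(q)` of the phase space point `ξ = (p,q)`. -/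
def weylOp (ε : F → ℂ) {K : Type*} [Fintype K] (ξ : (K → F) × (K → F)) :
    HS F K →ₗ[ℂ] HS F K :=
  multOp ε ξ.1 ∘ₗ shiftOp ξ.2

/-- The normalization constant `d^(-n/2)` (where `d = |F|`) as a complex number. -/
def rnorm (F : Type*) [Fintype F] (n : ℕ) : ℂ :=
  (((Fintype.card F : ℝ) ^ (-(n : ℝ) / 2) : ℝ) : ℂ)

/-- The Haar-normalized inner product on `H_K`:
`⟨ψ,φ⟩ = d^(-|K|) Σ_q conj(ψ q) φ q`. -/
def hinner {K : Type*} [Fintype K] [DecidableEq K] (ψ φ : HS F K) : ℂ :=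
  ((Fintype.card F : ℂ) ^ (Fintype.card K))⁻¹ *
    ∑ q : K → F, (starRingEnd ℂ) (ψ q) * φ q

/-- The delta-function basis vector located at `q`. -/
def deltaV {K : Type*} [Fintype K] [DecidableEq K] (q : K → F) : HS F K :=
  fun q' => if q' = q then 1 else 0

/-- The adjoint of an operator with respect to the Haar-normalized inner
products `hinner` on source and target. -/
def hAdj {K M : Type*} [Fintype K] [Fintype M] [DecidableEq K] [DecidableEq M]
    (A : HS F K →ₗ[ℂ] HS F M) : HS F M →ₗ[ℂ] HS F K :=
  kernelMap (fun qK qM =>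
    (Fintype.card F : ℂ) ^ (Fintype.card K) * ((Fintype.card F : ℂ) ^ (Fintype.card M))⁻¹ *
      (starRingEnd ℂ) (A (deltaV qK) qM))

variable {I J L : Type*} [Fintype I] [Fintype J] [Fintype L]
  [DecidableEq I] [DecidableEq J] [DecidableEq L]

/-- Combining configurations on `I`, `J`, `L` into one on `I ⊕ J ⊕ L`. -/
def combine (qI : I → F) (qJ : J → F) (qL : L → F) : (I ⊕ J ⊕ L) → F :=
  Sum.elim qI (Sum.elim qJ qL)

/-- Inclusion of the input vertices. -/
def inI : I → I ⊕ J ⊕ L := Sum.inl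
/-- Inclusion of the output vertices. -/
def inJ : J → I ⊕ J ⊕ L := fun j => Sum.inr (Sum.inl j)
/-- Inclusion of the syndrome vertices. -/
def inL : L → I ⊕ J ⊕ L := fun l => Sum.inr (Sum.inr l)
/-- Inclusion of the input and syndrome vertices. -/
def embIL : I ⊕ L → I ⊕ J ⊕ L := Sum.elim inI inL

/-- The `J`-rows of `Λ` applied to a full configuration (`Λ^J_{IJL} q^{IJL}`). -/
def appJ (Λ : Matrix (I ⊕ J ⊕ L) (I ⊕ J ⊕ L) F) (v : (I ⊕ J ⊕ L) → F) : J → F :=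
  fun j => Λ.mulVec v (inJ j)

/-- The `I`-rows of `Λ` applied to a full configuration (`Λ^I_{IJL} q^{IJL}`). -/
def appI (Λ : Matrix (I ⊕ J ⊕ L) (I ⊕ J ⊕ L) F) (v : (I ⊕ J ⊕ L) → F) : I → F :=
  fun i => Λ.mulVec v (inI i)

/-- The block `Λ^J_{IL}` (rows in `J`, columns in `I ∪ L`). -/
def blockJIL (Λ : Matrix (I ⊕ J ⊕ L) (I ⊕ J ⊕ L) F) : Matrix J (I ⊕ L) F :=
  fun j il => Λ (inJ j) (embIL il)

/-- A weighted graph (adjacency matrix) is admissible: it is symmetric, the block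
`Λ^J_{IL}` is invertible and the block `Λ^{IL}_{IL}` vanishes. -/
def Admissible (Λ : Matrix (I ⊕ J ⊕ L) (I ⊕ J ⊕ L) F) : Prop :=
  Λ.IsSymm ∧ (∃ B : Matrix (I ⊕ L) J F, blockJIL Λ * B = 1 ∧ B * blockJIL Λ = 1) ∧
    ∀ a b : I ⊕ L, Λ (embIL a) (embIL b) = 0

/-- `τ(Λ,·)` is a family of unimodular phases forming a one-dimensional projective
representation: `τ(q₁+q₂) = τ(q₁)τ(q₂)χ(Λq₁,q₂)`. -/
def IsTau (ε : F → ℂ) (Λ : Matrix (I ⊕ J ⊕ L) (I ⊕ J ⊕ L) F)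
    (tau : ((I ⊕ J ⊕ L) → F) → ℂ) : Prop :=
  (∀ q, ‖tau q‖ = 1) ∧
    ∀ q₁ q₂, tau (q₁ + q₂) = tau q₁ * tau q₂ * chi ε (Λ.mulVec q₁) q₂

/-- The graph code operator `v_{[Λ,q^L]} : H_I → H_J`,
`(v ψ)(q^J) = d^(-|I|/2) Σ_{q^I} τ(Λ, q^{IJL}) ψ(q^I)`. -/
def gcode (tau : ((I ⊕ J ⊕ L) → F) → ℂ) (qL : L → F) : HS F I →ₗ[ℂ] HS F J :=
  kernelMap (fun qJ qI => rnorm F (Fintype.card I) * tau (combine qI qJ qL))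

/-- The syndrome-table condition `γ_Λ(ξ^J, q^L, ξ^I) = 0`:
`p^J = Λ^J_{IJL} q^{IJL}` and `p^I = Λ^I_J q^J`. -/
def GammaZero (Λ : Matrix (I ⊕ J ⊕ L) (I ⊕ J ⊕ L) F)
    (pJ qJ : J → F) (qL : L → F) (pI qI : I → F) : Prop :=
  pJ = appJ Λ (combine qI qJ qL) ∧ pI = appI Λ (combine 0 qJ 0)

/-- The weight of a phase space vector `ξ^J = (p^J,q^J)`. -/
def wt {J : Type*} [Fintype J] (pJ qJ : J → F) : ℕ :=
  (Finset.univ.filter fun j => ¬(pJ j = 0 ∧ qJ j = 0)).card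

/-- `Λ` is associated with a `t`-error correcting code: for every set `E ⊆ J` with
at most `2t` elements, `Λ^{J∖E}_{IE} q^{IE} = 0` implies `q^I = 0` and
`Λ^I_E q^E = 0`. -/
def TCode (Λ : Matrix (I ⊕ J ⊕ L) (I ⊕ J ⊕ L) F) (t : ℕ) : Prop :=
  ∀ E : Finset J, E.card ≤ 2 * t → ∀ (qI : I → F) (qJ : J → F),
    (∀ j ∉ E, qJ j = 0) →
    (∀ j ∉ E, appJ Λ (combine qI qJ 0) j = 0) →
    qI = 0 ∧ appI Λ (combine 0 qJ 0) = 0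

/-- Tensoring with the standard (shift invariant) vector `Ω_K ≡ 1`:
the isometry `Φ_K : H_M → H_{M⊕K}`, `(Φψ)(q) = ψ(q∘inl)`. -/
def tensOmega {M K : Type*} : HS F M →ₗ[ℂ] HS F (M ⊕ K) :=
  compMap (fun q => q ∘ Sum.inl)

/-- The Fourier transform acting on the `K`-factor of `H_{M⊕K}`. -/
def fourierR (ε : F → ℂ) {M K : Type*} [Fintype K] [DecidableEq K] :
    HS F (M ⊕ K) →ₗ[ℂ] HS F (M ⊕ K) where
  toFun φ := fun q => ∑ qK' : K → F,
    rnorm F (Fintype.card K) * chi ε (q ∘ Sum.inr) qK' * φ (Sum.elim (q ∘ Sum.inl) qK')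
  map_add' φ₁ φ₂ := by
    funext q
    simp only [Pi.add_apply, mul_add, Finset.sum_add_distrib]
  map_smul' c φ := by
    funext q
    simp only [Pi.smul_apply, smul_eq_mul, RingHom.id_apply, Finset.mul_sum]
    exact Finset.sum_congr rfl fun _ _ => by ring

/-- The multiplier `z(p)` acting on the `K`-factor of `H_{M⊕K}`. -/
def zR (ε : F → ℂ) {M K : Type*} [Fintype K] (p : K → F) :
    HS F (M ⊕ K) →ₗ[ℂ] HS F (M ⊕ K) :=
  mulFun (fun q => chi ε p (q ∘ Sum.inr))

/-- The selected error `ξ^I_{[q^L]}`: the unique `ξ^I` such that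
`γ_Λ(ξ^J, q^L, ξ^I) = 0` for some `ξ^J` of weight at most `t`, if such exists,
and `(0,0)` otherwise. -/
def xiSel (Λ : Matrix (I ⊕ J ⊕ L) (I ⊕ J ⊕ L) F) (t : ℕ) (qL : L → F) :
    (I → F) × (I → F) :=
  @dite _ (∃ ξI : (I → F) × (I → F), ∃ pJ qJ : J → F,
      wt pJ qJ ≤ t ∧ GammaZero Λ pJ qJ qL ξI.1 ξI.2)
    (Classical.dec _) (fun h => h.choose) (fun _ => (0, 0))

/-! Write `q^{IJL} = (0,0,q^L) + (q^I,q^J,0)` and apply the cocycle law of `τ`. In the cross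
term `χ(Λ(0,0,q^L), (q^I,q^J,0))` the `I`-part vanishes because `Λ^I_L = 0` and the `L`-part
because the second argument is zero there, leaving `χ(Λ^J_L q^L, q^J)`: the multiplier
`z(Λ^J_L q^L)` on `H_J`, times the constant phase `λ = τ(0,0,q^L)`. -/

theorem kernelMap_eq_smul_mulFun_comp {α β : Type*} [Fintype α] {k k' : β → α → ℂ}
    {c : ℂ} {f : β → ℂ} (h : ∀ b a, k b a = c * f b * k' b a) :
    kernelMap k = c • (mulFun f ∘ₗ kernelMap k') := by
  ext ψ b
  simp only [kernelMap, mulFun, LinearMap.smul_apply, LinearMap.comp_apply, LinearMap.coe_mk,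
    AddHom.coe_mk, Pi.smul_apply, smul_eq_mul, Finset.mul_sum, h]
  exact Finset.sum_congr rfl fun _ _ => by ring

section

omit [Fintype F] [DecidableEq F] [DecidableEq I] [DecidableEq J] [DecidableEq L]

theorem IsCharacter.map_zero {ε : F → ℂ} (hε : IsCharacter ε) : ε 0 = 1 := by
  have hne : ε 0 ≠ 0 := norm_ne_zero_iff.mp (by rw [hε.2.1 0]; exact one_ne_zero)
  have h := hε.2.2 0 0
  rw [add_zero] at h
  exact (mul_eq_left₀ hne).mp h.symm

theorem chi_zero_left {ε : F → ℂ} (h0 : ε 0 = 1) {K : Type*} [Fintype K] (q : K → F) :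
    chi ε 0 q = 1 := by
  simp [chi, h0]

theorem chi_zero_right {ε : F → ℂ} (h0 : ε 0 = 1) {K : Type*} [Fintype K] (p : K → F) :
    chi ε p 0 = 1 := by
  simp [chi, h0]

theorem chi_combine (ε : F → ℂ) (p : (I ⊕ J ⊕ L) → F) (qI : I → F) (qJ : J → F) (qL : L → F) :
    chi ε p (combine qI qJ qL) = chi ε (p ∘ inI) qI * chi ε (p ∘ inJ) qJ * chi ε (p ∘ inL) qL := by
  simp only [chi, Fintype.prod_sum_type, combine, Sum.elim_inl, Sum.elim_inr, mul_assoc]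
  rfl

theorem appI_combine_syndrome_eq_zero {Λ : Matrix (I ⊕ J ⊕ L) (I ⊕ J ⊕ L) F}
    (hIL : ∀ i l, Λ (inI i) (inL l) = 0) (qL : L → F) :
    appI Λ (combine (0 : I → F) (0 : J → F) qL) = 0 := by
  ext i
  simp only [appI, Matrix.mulVec, dotProduct, Fintype.sum_sum_type, combine, Sum.elim_inl,
    Sum.elim_inr, Pi.zero_apply, mul_zero, Finset.sum_const_zero, zero_add]
  exact Finset.sum_eq_zero fun l _ => mul_eq_zero_of_left (hIL i l) _

theorem IsTau.tau_combine {ε : F → ℂ} {Λ : Matrix (I ⊕ J ⊕ L) (I ⊕ J ⊕ L) F}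
    {tau : ((I ⊕ J ⊕ L) → F) → ℂ} (htau : IsTau ε Λ tau) (h0 : ε 0 = 1)
    (hIL : ∀ i l, Λ (inI i) (inL l) = 0) (qI : I → F) (qJ : J → F) (qL : L → F) :
    tau (combine qI qJ qL) = tau (combine 0 0 qL) *
      chi ε (appJ Λ (combine 0 0 qL)) qJ * tau (combine qI qJ 0) := by
  have hsplit : combine qI qJ qL = combine 0 0 qL + combine qI qJ 0 := by
    ext (i | j | l) <;> simp [combine]
  rw [hsplit, htau.2, chi_combine]
  have hI : Λ.mulVec (combine 0 0 qL) ∘ inI = 0 := appI_combine_syndrome_eq_zero hIL qL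
  rw [hI, chi_zero_left h0, chi_zero_right h0]
  rw [one_mul, mul_one]
  exact mul_right_comm _ _ _

end

/-- Lemma com-rel, part 3. For an admissible graph `Λ`, for every
`q^L` there is a unimodular `λ` with `v_{[Λ,q^L]} = λ · z(Λ^J_L q^L) v_{[Λ,0^L]}`. -/
theorem gcode_syndrome_translation
    {F : Type*} [Field F] [Fintype F] [DecidableEq F]
    {I J L : Type*} [Fintype I] [Fintype J] [Fintype L]
    [DecidableEq I] [DecidableEq J] [DecidableEq L]
    (ε : F → ℂ) (hε : IsCharacter ε)
    (Λ : Matrix (I ⊕ J ⊕ L) (I ⊕ J ⊕ L) F) (hΛ : Admissible Λ)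
    (tau : ((I ⊕ J ⊕ L) → F) → ℂ) (htau : IsTau ε Λ tau) :
    ∀ qL : L → F, ∃ lam : ℂ, ‖lam‖ = 1 ∧
      gcode tau qL
        = lam • (multOp ε (appJ Λ (combine 0 0 qL)) ∘ₗ gcode tau (0 : L → F)) := by
  intro qL
  refine ⟨tau (combine 0 0 qL), htau.1 _, kernelMap_eq_smul_mulFun_comp fun qJ qI => ?_⟩
  rw [htau.tau_combine hε.map_zero (fun i l => hΛ.2.2 (.inl i) (.inr l))]
  ring
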